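/- Let k be a field with char k ≠ 2 containing an element i with i² = −1. Let (x,x*) ∈ H × H be nonzero, and set μ = 1 if ⟨x*,x⟩ = 1 and μ = i if ⟨x*,x⟩ = −1. Then the matrix M := μ·β_{x*}·α_x satisfies M² = 1, det M = 1, M ≠ 1 and M ≠ −1; consequently k⁴ is the direct sum of the eigenspaces ker(M − 1) and ker(M + 1), and each of these two eigenspaces has dimension 2. -/

import Mathlib

open Matrix

/-- The group `H = (ℤ/2ℤ)²`, with elements written `00, 01, 10, 11`. -/
abbrev H2 : Type := ZMod 2 × ZMod 2

/-- The pairing `⟨x, z⟩ = (−1)^(x₁z₁ + x₂z₂) ∈ k`. -/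
def pairing (k : Type*) [Field k] (x z : H2) : k :=
  (-1 : k) ^ (x.1.val * z.1.val + x.2.val * z.2.val)

/-- `α_x`: the permutation matrix of `z ↦ z + x`, sending `e_z` to `e_{z+x}`. -/
def alphaM (k : Type*) [Field k] (x : H2) : Matrix H2 H2 k :=
  Matrix.of fun i j => if i = j + x then 1 else 0

/-- `β_{x*}`: the diagonal matrix with entry `⟨x*, z⟩` at position `z`. -/
def betaM (k : Type*) [Field k] (xs : H2) : Matrix H2 H2 k :=
  Matrix.diagonal fun z => pairing k xs z

section Aux

variable {k : Type*} [Field k]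

lemma zv0 : ZMod.val (0 : ZMod 2) = 0 := by decide
lemma zv1 : ZMod.val (1 : ZMod 2) = 1 := by decide
lemma zv2 : ZMod.val (2 : ZMod 2) = 0 := by decide
lemma zvD (a : ZMod 2) : ZMod.val a = if a = 0 then 0 else 1 := by fin_cases a <;> rfl

lemma H2_add_self : ∀ y : H2, y + y = 0 := by decide

lemma H2_ne_zero : ∀ y : H2, y ≠ 0 → y.1 = 1 ∨ y.2 = 1 := by decide

lemma pairing_sq (xs z : H2) : pairing k xs z * pairing k xs z = 1 := by
  rw [pairing, ← pow_add, ← two_mul, pow_mul]; norm_num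

lemma pairing_cases (xs z : H2) : pairing k xs z = 1 ∨ pairing k xs z = -1 := by
  rcases Nat.even_or_odd (xs.1.val * z.1.val + xs.2.val * z.2.val) with h | h
  · exact Or.inl (by rw [pairing, h.neg_one_pow])
  · exact Or.inr (by rw [pairing, h.neg_one_pow])

lemma pairing_zero_right (xs : H2) : pairing k xs 0 = 1 := by
  simp [pairing, zv0]

lemma pairing_add (xs a b : H2) : pairing k xs (a + b) = pairing k xs a * pairing k xs b := by
  obtain ⟨a1, a2⟩ := a; obtain ⟨b1, b2⟩ := b; obtain ⟨c1, c2⟩ := xs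
  fin_cases a1 <;> fin_cases a2 <;> fin_cases b1 <;> fin_cases b2 <;> fin_cases c1 <;>
    fin_cases c2 <;> norm_num +decide [pairing, zv0, zv1, zv2, zvD]

lemma alpha_mul_self (x : H2) : alphaM k x * alphaM k x = 1 := by
  ext a b
  rw [Matrix.mul_apply, Finset.sum_eq_single (b + x)]
  · have hbb : b + x + x = b := by rw [add_assoc, H2_add_self, add_zero]
    simp [alphaM, Matrix.one_apply, hbb]
  · intro c _ hc
    simp only [alphaM, of_apply]
    rw [if_neg hc, mul_zero]
  · simp

lemma beta_mul_self (xs : H2) : betaM k xs * betaM k xs = 1 := by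
  rw [betaM, Matrix.diagonal_mul_diagonal]
  convert Matrix.diagonal_one
  exact pairing_sq xs _

lemma alpha_mul_beta (x xs : H2) :
    alphaM k x * betaM k xs = pairing k xs x • (betaM k xs * alphaM k x) := by
  ext a b
  rw [betaM, Matrix.mul_diagonal, Matrix.smul_apply, Matrix.diagonal_mul]
  simp only [alphaM, of_apply, smul_eq_mul]
  by_cases h : a = b + x
  · subst h
    rw [if_pos rfl, pairing_add]
    linear_combination (-(pairing k xs b)) * pairing_sq (k := k) xs x
  · rw [if_neg h]; ring

lemma alphaM_zero : alphaM k 0 = 1 := by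
  ext a b
  simp [alphaM, Matrix.one_apply]

lemma zmod2_sum {M : Type*} [AddCommMonoid M] (f : ZMod 2 → M) : ∑ z, f z = f 0 + f 1 := by
  rw [show (Finset.univ : Finset (ZMod 2)) = {0, 1} from by decide, Finset.sum_pair (by decide)]

lemma zmod2_prod {M : Type*} [CommMonoid M] (f : ZMod 2 → M) : ∏ z, f z = f 0 * f 1 := by
  rw [show (Finset.univ : Finset (ZMod 2)) = {0, 1} from by decide, Finset.prod_pair (by decide)]

lemma det_beta (xs : H2) : (betaM k xs).det = 1 := by
  rw [betaM, Matrix.det_diagonal, Fintype.prod_prod_type]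
  rw [zmod2_prod, zmod2_prod, zmod2_prod]
  obtain ⟨c1, c2⟩ := xs
  fin_cases c1 <;> fin_cases c2 <;> norm_num +decide [pairing, zv0, zv1, zv2, zvD]

/-- An equivalence `Fin 4 ≃ H2` used to compute determinants. -/
def eH : Fin 4 ≃ H2 where
  toFun := ![(0, 0), (0, 1), (1, 0), (1, 1)]
  invFun p := ⟨2 * p.1.val + p.2.val, by have := p.1.val_lt; have := p.2.val_lt; omega⟩
  left_inv := by decide
  right_inv := by decide

set_option linter.unnecessarySeqFocus false in
lemma det_alpha (x : H2) : (alphaM k x).det = 1 := by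
  rw [← Matrix.det_submatrix_equiv_self eH]
  obtain ⟨x1, x2⟩ := x
  fin_cases x1 <;> fin_cases x2 <;>
    simp +decide [Matrix.det_succ_row_zero,
      Fin.sum_univ_succ, alphaM, eH, Matrix.submatrix, Fin.succAbove]

lemma trace_ba (x xs : H2) (hx : ¬(x = 0 ∧ xs = 0)) :
    (betaM k xs * alphaM k x).trace = 0 := by
  by_cases hx0 : x = 0
  · subst hx0
    have hxs : xs ≠ 0 := fun h => hx ⟨rfl, h⟩
    rw [alphaM_zero, mul_one, betaM, Matrix.trace, Fintype.sum_prod_type]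
    simp only [Matrix.diag_apply, Matrix.diagonal_apply_eq]
    rw [zmod2_sum]
    rw [zmod2_sum ((fun z2 => pairing k xs (0, z2))), zmod2_sum ((fun z2 => pairing k xs (1, z2)))]
    obtain ⟨c1, c2⟩ := xs
    fin_cases c1 <;> fin_cases c2
    · exact absurd rfl hxs
    all_goals norm_num +decide [pairing, zv0, zv1, zv2, zvD]
  · rw [Matrix.trace]
    apply Finset.sum_eq_zero
    intro z _
    rw [betaM, Matrix.diag_apply, Matrix.diagonal_mul]
    simp only [alphaM, of_apply]
    rw [if_neg (by simpa [left_eq_add] using hx0), mul_zero]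

end Aux

/-- For nonzero `(x,x*) ∈ H × H`, the matrix `M = μ·β_{x*}·α_x` (with `μ = 1` if
`⟨x*,x⟩ = 1` and `μ = i` if `⟨x*,x⟩ = −1`) satisfies `M² = 1`, `det M = 1`,
`M ≠ ±1`; consequently `k⁴` is the direct sum of the eigenspaces `ker(M − 1)` and
`ker(M + 1)`, each of dimension 2. -/
theorem statement3 {k : Type*} [Field k] (hchar : ringChar k ≠ 2)
    (i : k) (hi : i ^ 2 = -1) (x xs : H2) (hx : ¬(x = 0 ∧ xs = 0))
    (μ : k) (hμ1 : pairing k xs x = 1 → μ = 1) (hμ2 : pairing k xs x = -1 → μ = i)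
    (M : Matrix H2 H2 k) (hM : M = μ • (betaM k xs * alphaM k x)) :
    M ^ 2 = 1 ∧ M.det = 1 ∧ M ≠ 1 ∧ M ≠ -1 ∧
    IsCompl (LinearMap.ker (Matrix.toLin' (M - 1)))
      (LinearMap.ker (Matrix.toLin' (M + 1))) ∧
    Module.finrank k (LinearMap.ker (Matrix.toLin' (M - 1))) = 2 ∧
    Module.finrank k (LinearMap.ker (Matrix.toLin' (M + 1))) = 2 := by
  have h2 : (2 : k) ≠ 0 := Ring.two_ne_zero hchar
  have hμ4 : μ ^ 4 = 1 := by
    rcases pairing_cases (k := k) xs x with hp | hp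
    · rw [hμ1 hp]; norm_num
    · rw [hμ2 hp, show (4 : ℕ) = 2 * 2 from rfl, pow_mul, hi]; norm_num
  -- M ^ 2 = 1
  have hsq : M ^ 2 = 1 := by
    have hA : (betaM k xs * alphaM k x) * (betaM k xs * alphaM k x)
        = pairing k xs x • (1 : Matrix H2 H2 k) := by
      calc betaM k xs * alphaM k x * (betaM k xs * alphaM k x)
          = betaM k xs * (alphaM k x * betaM k xs) * alphaM k x := by
            simp only [mul_assoc]
        _ = betaM k xs * (pairing k xs x • (betaM k xs * alphaM k x)) * alphaM k x := by
            rw [alpha_mul_beta]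
        _ = pairing k xs x • ((betaM k xs * betaM k xs) * (alphaM k x * alphaM k x)) := by
            rw [Matrix.mul_smul, Matrix.smul_mul]
            congr 1
            simp only [mul_assoc]
        _ = pairing k xs x • (1 : Matrix H2 H2 k) := by
            rw [beta_mul_self, alpha_mul_self, one_mul]
    rw [hM, smul_pow, pow_two (betaM k xs * alphaM k x), hA, smul_smul]
    rcases pairing_cases (k := k) xs x with hp | hp
    · rw [hp, hμ1 hp]; norm_num
    · rw [hp, hμ2 hp, mul_neg_one, hi, neg_neg, one_smul]
  -- det
  have hdet : M.det = 1 := by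
    rw [hM, Matrix.det_smul, Matrix.det_mul, det_beta, det_alpha,
      show Fintype.card H2 = 4 from rfl, hμ4]; ring
  -- trace
  have htr0 : M.trace = 0 := by
    rw [hM, Matrix.trace_smul, trace_ba x xs hx, smul_zero]
  -- M ≠ ±1
  have hne1 : M ≠ 1 ∧ M ≠ -1 := by
    by_cases hx0 : x = 0
    · subst hx0
      have hxs : xs ≠ 0 := fun h => hx ⟨rfl, h⟩
      have hμ : μ = 1 := hμ1 (pairing_zero_right xs)
      have hMb : M = betaM k xs := by rw [hM, hμ, alphaM_zero, mul_one, one_smul]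
      have hne11 : (-1 : k) ≠ 1 := Ring.neg_one_ne_one_of_char_ne_two hchar
      constructor
      · intro h
        rcases H2_ne_zero xs hxs with h1 | h1
        · have hc := congrArg (fun A => A ((1 : ZMod 2), (0 : ZMod 2)) ((1 : ZMod 2), (0 : ZMod 2))) h
          simp only [hMb, betaM, Matrix.diagonal_apply_eq, Matrix.one_apply_eq] at hc
          rw [pairing] at hc
          simp only [zv1, zv0, mul_one, mul_zero, add_zero] at hc
          rw [h1, zv1, pow_one] at hc
          exact hne11 hc
        · have hc := congrArg (fun A => A ((0 : ZMod 2), (1 : ZMod 2)) ((0 : ZMod 2), (1 : ZMod 2))) h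
          simp only [hMb, betaM, Matrix.diagonal_apply_eq, Matrix.one_apply_eq] at hc
          rw [pairing] at hc
          simp only [zv1, zv0, mul_one, mul_zero, zero_add] at hc
          rw [h1, zv1, pow_one] at hc
          exact hne11 hc
      · intro h
        have := congrArg (fun A => A (0 : H2) 0) h
        simp only [hMb, betaM, Matrix.diagonal_apply_eq, Matrix.neg_apply,
          Matrix.one_apply_eq, pairing_zero_right] at this
        exact hne11 this.symm
    · have hzero : M (0 : H2) 0 = 0 := by
        rw [hM, Matrix.smul_apply, betaM, Matrix.diagonal_mul]
        simp only [alphaM, of_apply]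
        rw [if_neg (by rw [zero_add]; exact fun hh => hx0 hh.symm), mul_zero, smul_zero]
      constructor
      · intro h
        rw [h, Matrix.one_apply_eq] at hzero
        exact one_ne_zero hzero
      · intro h
        rw [h, Matrix.neg_apply, Matrix.one_apply_eq] at hzero
        exact one_ne_zero (neg_eq_zero.mp hzero)
  -- linear algebra part
  set f := Matrix.toLin' M with hf
  have hff : ∀ v, f (f v) = v := by
    intro v
    rw [hf, ← Matrix.toLin'_mul_apply, ← pow_two, hsq, Matrix.toLin'_one, LinearMap.id_apply]
  set U := LinearMap.ker (Matrix.toLin' (M - 1)) with hUdef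
  set V := LinearMap.ker (Matrix.toLin' (M + 1)) with hVdef
  have hUc : ∀ v, v ∈ U ↔ f v = v := by
    intro v
    rw [hUdef, LinearMap.mem_ker, map_sub, Matrix.toLin'_one, LinearMap.sub_apply,
      LinearMap.id_apply, sub_eq_zero, hf]
  have hVc : ∀ v, v ∈ V ↔ f v = -v := by
    intro v
    rw [hVdef, LinearMap.mem_ker, map_add, Matrix.toLin'_one, LinearMap.add_apply,
      LinearMap.id_apply, hf, add_eq_zero_iff_eq_neg]
  have hcompl : IsCompl U V := by
    constructor
    · rw [Submodule.disjoint_def]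
      intro v hu hv
      have h1 : f v = v := (hUc v).mp hu
      have hvv : v = -v := h1.symm.trans ((hVc v).mp hv)
      have hv0 : v + v = 0 :=
        (show v + v = v + -v from by rw [← hvv]).trans (add_neg_cancel v)
      have : (2 : k) • v = 0 := by rw [two_smul, hv0]
      rcases smul_eq_zero.mp this with h | h
      · exact absurd h h2
      · exact h
    · rw [codisjoint_iff, eq_top_iff]
      intro v _
      have ha : (2 : k)⁻¹ • (v + f v) ∈ U := by
        rw [hUc, _root_.map_smul, map_add, hff, add_comm (f v) v]
      have hb : (2 : k)⁻¹ • (v - f v) ∈ V := by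
        rw [hVc, _root_.map_smul, map_sub, hff, ← smul_neg, neg_sub]
      refine Submodule.mem_sup.mpr ⟨_, ha, _, hb, ?_⟩
      rw [← smul_add, show v + f v + (v - f v) = (2 : k) • v from by rw [two_smul]; abel,
        smul_smul, inv_mul_cancel₀ h2, one_smul]
  have hcard : (Fintype.card H2 : k) = 4 := by norm_num [show Fintype.card H2 = 4 from rfl]
  -- the projection onto U along V
  have hfinU : Module.finrank k U = 2 := by
    set Pm : Matrix H2 H2 k := (2 : k)⁻¹ • (1 + M) with hPm
    have hPw : ∀ w, Matrix.toLin' Pm w = (2 : k)⁻¹ • (w + f w) := by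
      intro w
      rw [hPm, _root_.map_smul, map_add, Matrix.toLin'_one, LinearMap.smul_apply, LinearMap.add_apply,
        LinearMap.id_apply, hf]
    have hproj : LinearMap.IsProj U (Matrix.toLin' Pm) := by
      constructor
      · intro w
        rw [hUc, hPw, _root_.map_smul, map_add, hff, add_comm (f w) w]
      · intro w hw
        rw [hPw, (hUc w).mp hw, ← two_smul k w, smul_smul, inv_mul_cancel₀ h2, one_smul]
    have htrP := hproj.trace
    rw [LinearMap.trace_eq_matrix_trace k (Pi.basisFun k H2), LinearMap.toMatrix_eq_toMatrix',
      LinearMap.toMatrix'_toLin', hPm, Matrix.trace_smul, Matrix.trace_add, Matrix.trace_one,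
      htr0, add_zero, hcard] at htrP
    have hcast : ((Module.finrank k U : k)) = 2 := by
      rw [← htrP, smul_eq_mul, show (4 : k) = 2 * 2 from by norm_num, inv_mul_cancel_left₀ h2]
    have hle : Module.finrank k U ≤ 4 := by
      have := Submodule.finrank_le U
      rwa [Module.finrank_pi, show Fintype.card H2 = 4 from rfl] at this
    interval_cases hd : Module.finrank k U <;> try push_cast at hcast
    · exact absurd (by linear_combination -hcast : (2 : k) = 0) h2
    · exact absurd (by linear_combination -hcast : (1 : k) = 0) one_ne_zero
    · rfl
    · exact absurd (by linear_combination hcast : (1 : k) = 0) one_ne_zero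
    · exact absurd (by linear_combination hcast : (2 : k) = 0) h2
  have hfinV : Module.finrank k V = 2 := by
    have hsum := Submodule.finrank_add_eq_of_isCompl hcompl
    rw [Module.finrank_pi, show Fintype.card H2 = 4 from rfl, hfinU] at hsum
    omega
  exact ⟨hsq, hdet, hne1.1, hne1.2, hcompl, hfinU, hfinV⟩
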